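/- Let p, σ₁, σ₂ ∈ (0,∞], α₁, α₂ ∈ ℝ, α₃ ≥ 0, and let {t_k} be a p-admissible weight sequence such that {t̄_k} ∈ 𝒳^{α₃}_{α,σ,p}, where α = (α₁,α₂), σ = (σ₁,σ₂). Then for every pair j ≥ k ≥ 0 and every m, m̃ ∈ ℤⁿ with Q_{j,m̃} ⊂ Q_{k,m}: (1/C) t_{j,m̃} ≤ t_{k,m} ≤ C t_{j,m̃}, where C > 0 depends only on n, p, σ, α, α₃, the constants in the definition of 𝒳^{α₃}_{α,σ,p}, and on the difference j − k (but not on k, m, m̃). -/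

import Mathlib

/-!
On each cube `Q_{j,m'}` the step weight `t̄_j` is a.e. the constant `2^{jn/p} t_{j,m'}`, so its
`L_σ`-norms over `Q_{j,m'}` are explicit powers of `2` times `t_{j,m'}^{±1}`; in particular
`t̄_{k,m} = t_{k,m}`. In conditions (i) and (ii) for the pair `k ≤ j` the integrals over `Q_{k,m}`
dominate those over `Q_{j,m'} ⊆ Q_{k,m}`, so (i) bounds `t_{k,m} / t_{j,m'}` and (ii) bounds
`t_{j,m'} / t_{k,m}`, by `C₁` resp. `C₂` times a power of `2` that depends only on `j - k`.
-/

open MeasureTheory ENNReal Filter Topology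

noncomputable section

def lqNorm (q : ℝ≥0∞) (a : ℕ → ℝ≥0∞) : ℝ≥0∞ :=
  if q = ∞ then ⨆ k, a k else (∑' k, a k ^ q.toReal) ^ (1 / q.toReal)

def lpSum {ι : Type*} (p : ℝ≥0∞) (a : ι → ℝ≥0∞) : ℝ≥0∞ :=
  if p = ∞ then ⨆ m, a m else (∑' m, a m ^ p.toReal) ^ (1 / p.toReal)

def dyadicCube (n k : ℕ) (m : Fin n → ℤ) : Set (Fin n → ℝ) :=
  {x | ∀ i, (m i : ℝ) / 2 ^ k ≤ x i ∧ x i ≤ ((m i : ℝ) + 1) / 2 ^ k}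

def dilatedCube (n : ℕ) (c : ℝ) (k : ℕ) (m : Fin n → ℤ) : Set (Fin n → ℝ) :=
  {x | ∀ i, |x i - ((m i : ℝ) + 1 / 2) / 2 ^ k| ≤ c / (2 * 2 ^ k)}

def tkm (n : ℕ) (p : ℝ≥0∞) (t : ℕ → (Fin n → ℝ) → ℝ) (k : ℕ) (m : Fin n → ℤ) : ℝ≥0∞ :=
  eLpNorm (t k) p (volume.restrict (dyadicCube n k m))

def PAdmissible (n : ℕ) (p : ℝ≥0∞) (t : ℕ → (Fin n → ℝ) → ℝ) : Prop :=
  (∀ k, Measurable (t k)) ∧ (∀ k, ∀ᵐ x : Fin n → ℝ, 0 < t k x) ∧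
    ∀ k m, tkm n p t k m < ∞

def MemX (n : ℕ) (p σ₁ σ₂ : ℝ≥0∞) (α₁ α₂ α₃ : ℝ) (t : ℕ → (Fin n → ℝ) → ℝ) : Prop :=
  PAdmissible n p t ∧
  (∃ C₁ : ℝ, 0 < C₁ ∧ ∀ k j : ℕ, k ≤ j → ∀ m : Fin n → ℤ,
    (((2 : ℝ≥0∞) ^ (k * n)) ^ p⁻¹.toReal * tkm n p t k m) *
      (((2 : ℝ≥0∞) ^ (k * n)) ^ σ₁⁻¹.toReal *
        eLpNorm (fun x => (t j x)⁻¹) σ₁ (volume.restrict (dyadicCube n k m)))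
      ≤ ENNReal.ofReal (C₁ * 2 ^ (α₁ * ((k : ℝ) - (j : ℝ))))) ∧
  (∃ C₂ : ℝ, 0 < C₂ ∧ ∀ k j : ℕ, k ≤ j → ∀ m : Fin n → ℤ,
    ((2 : ℝ≥0∞) ^ (k * n)) ^ σ₂⁻¹.toReal *
        eLpNorm (t j) σ₂ (volume.restrict (dyadicCube n k m))
      ≤ ENNReal.ofReal (C₂ * 2 ^ (α₂ * ((j : ℝ) - (k : ℝ)))) *
        (((2 : ℝ≥0∞) ^ (k * n)) ^ p⁻¹.toReal * tkm n p t k m)) ∧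
  (∀ k m, 0 < tkm n p t k m) ∧
  (∀ (k : ℕ) (m m' : Fin n → ℤ), (∀ i, |m i - m' i| ≤ 1) →
    tkm n p t k m ≤ ENNReal.ofReal (2 ^ α₃) * tkm n p t k m')

def tbar (n : ℕ) (p : ℝ≥0∞) (t : ℕ → (Fin n → ℝ) → ℝ) (k : ℕ) (x : Fin n → ℝ) : ℝ :=
  (2 : ℝ) ^ (((k * n : ℕ) : ℝ) / p.toReal) * (tkm n p t k fun i => ⌊x i * 2 ^ k⌋).toReal

open Set

lemma ofReal_two_rpow (x : ℝ) : ENNReal.ofReal ((2 : ℝ) ^ x) = (2 : ℝ≥0∞) ^ x := by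
  rw [← ENNReal.ofReal_rpow_of_pos zero_lt_two, ENNReal.ofReal_ofNat]

lemma two_pow_rpow (N : ℕ) (y : ℝ) : ((2 : ℝ≥0∞) ^ N) ^ y = (2 : ℝ≥0∞) ^ ((N : ℝ) * y) := by
  rw [← ENNReal.rpow_natCast, ← ENNReal.rpow_mul]

lemma two_rpow_add (x y : ℝ) : (2 : ℝ≥0∞) ^ (x + y) = 2 ^ x * 2 ^ y :=
  ENNReal.rpow_add x y two_ne_zero ENNReal.ofNat_ne_top

lemma le_ofReal_mul_two_rpow_sub_mul {a b : ℝ≥0∞} {C x y : ℝ} (hC : 0 ≤ C)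
    (h : 2 ^ x * a ≤ ENNReal.ofReal (C * 2 ^ y) * b) :
    a ≤ ENNReal.ofReal (C * 2 ^ (y - x)) * b :=
  calc a = 2 ^ (-x) * (2 ^ x * a) := by
        rw [← mul_assoc, ← two_rpow_add, neg_add_cancel, ENNReal.rpow_zero, one_mul]
    _ ≤ 2 ^ (-x) * (ENNReal.ofReal (C * 2 ^ y) * b) := by gcongr
    _ = ENNReal.ofReal (C * 2 ^ (y - x)) * b := by
        rw [ENNReal.ofReal_mul hC, ENNReal.ofReal_mul hC, ofReal_two_rpow, ofReal_two_rpow,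
          sub_eq_add_neg, two_rpow_add]
        ring

lemma dyadicCube_eq_Icc (n k : ℕ) (m : Fin n → ℤ) :
    dyadicCube n k m = Icc (fun i => (m i : ℝ) / 2 ^ k) (fun i => ((m i : ℝ) + 1) / 2 ^ k) := by
  ext x
  simp [dyadicCube, Pi.le_def, forall_and]

lemma volume_dyadicCube (n k : ℕ) (m : Fin n → ℤ) :
    volume (dyadicCube n k m) = ((2 : ℝ≥0∞) ^ (k * n))⁻¹ := by
  have hside : ∀ i, ((m i : ℝ) + 1) / 2 ^ k - (m i : ℝ) / 2 ^ k = ((2 : ℝ) ^ k)⁻¹ := fun i => by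
    field_simp; ring
  rw [dyadicCube_eq_Icc, Real.volume_Icc_pi]
  simp only [hside, Finset.prod_const, Finset.card_univ, Fintype.card_fin,
    ENNReal.ofReal_inv_of_pos (by positivity : (0 : ℝ) < 2 ^ k)]
  rw [ENNReal.ofReal_pow zero_le_two, ENNReal.ofReal_ofNat, ENNReal.inv_pow, ← pow_mul,
    ENNReal.inv_pow]

lemma restrict_dyadicCube_ne_zero (n k : ℕ) (m : Fin n → ℤ) :
    volume.restrict (dyadicCube n k m) ≠ 0 := by
  simp [Measure.restrict_eq_zero, volume_dyadicCube]

lemma ae_restrict_dyadicCube_floor_eq (n k : ℕ) (m : Fin n → ℤ) :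
    ∀ᵐ x ∂volume.restrict (dyadicCube n k m), (fun i => ⌊x i * 2 ^ k⌋) = m := by
  have hIco : (univ.pi fun i => Ico ((m i : ℝ) / 2 ^ k) (((m i : ℝ) + 1) / 2 ^ k)) =ᵐ[volume]
      Icc (fun i => (m i : ℝ) / 2 ^ k) (fun i => ((m i : ℝ) + 1) / 2 ^ k) :=
    Measure.univ_pi_Ico_ae_eq_Icc
  rw [dyadicCube_eq_Icc, ← Measure.restrict_congr_set hIco]
  refine ae_restrict_of_forall_mem (MeasurableSet.univ_pi fun _ => measurableSet_Ico)
    fun x hx => funext fun i => ?_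
  obtain ⟨hlo, hhi⟩ := hx i (mem_univ i)
  exact Int.floor_eq_iff.2
    ⟨(div_le_iff₀ (by positivity)).1 hlo, (lt_div_iff₀ (by positivity)).1 hhi⟩

lemma eLpNorm_const_restrict_dyadicCube {E : Type*} [NormedAddCommGroup E] {σ : ℝ≥0∞}
    (hσ : σ ≠ 0) (c : E) (n k : ℕ) (m : Fin n → ℤ) :
    eLpNorm (fun _ => c) σ (volume.restrict (dyadicCube n k m))
      = ‖c‖ₑ * 2 ^ (-(((k * n : ℕ) : ℝ) * σ⁻¹.toReal)) := by
  rw [eLpNorm_const _ hσ (restrict_dyadicCube_ne_zero n k m), Measure.restrict_apply_univ,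
    volume_dyadicCube, ENNReal.inv_rpow, two_pow_rpow, ← ENNReal.rpow_neg, one_div,
    ENNReal.toReal_inv]

lemma tbar_ae_eq_const (n : ℕ) (p : ℝ≥0∞) (t : ℕ → (Fin n → ℝ) → ℝ) (k : ℕ) (m : Fin n → ℤ) :
    tbar n p t k =ᵐ[volume.restrict (dyadicCube n k m)]
      fun _ => (2 : ℝ) ^ (((k * n : ℕ) : ℝ) * p⁻¹.toReal) * (tkm n p t k m).toReal := by
  filter_upwards [ae_restrict_dyadicCube_floor_eq n k m] with x hx
  rw [tbar, hx, ENNReal.toReal_inv, div_eq_mul_inv]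

lemma enorm_two_rpow_mul_toReal (x : ℝ) {a : ℝ≥0∞} (ha : a ≠ ∞) :
    ‖(2 : ℝ) ^ x * a.toReal‖ₑ = 2 ^ x * a := by
  rw [Real.enorm_eq_ofReal (by positivity), ENNReal.ofReal_mul (by positivity), ofReal_two_rpow,
    ENNReal.ofReal_toReal ha]

section StepWeight

variable {n : ℕ} {p σ : ℝ≥0∞} {t : ℕ → (Fin n → ℝ) → ℝ} {k : ℕ} {m : Fin n → ℤ}

lemma eLpNorm_tbar_restrict_dyadicCube (hσ : σ ≠ 0) (hfin : tkm n p t k m ≠ ∞) :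
    eLpNorm (tbar n p t k) σ (volume.restrict (dyadicCube n k m))
      = 2 ^ (((k * n : ℕ) : ℝ) * (p⁻¹.toReal - σ⁻¹.toReal)) * tkm n p t k m := by
  rw [eLpNorm_congr_ae (tbar_ae_eq_const n p t k m), eLpNorm_const_restrict_dyadicCube hσ,
    enorm_two_rpow_mul_toReal _ hfin, mul_right_comm, ← two_rpow_add]
  congr 2
  ring

lemma eLpNorm_inv_tbar_restrict_dyadicCube (hσ : σ ≠ 0) (hpos : tkm n p t k m ≠ 0)
    (hfin : tkm n p t k m ≠ ∞) :
    eLpNorm (fun x => (tbar n p t k x)⁻¹) σ (volume.restrict (dyadicCube n k m))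
      = 2 ^ (-(((k * n : ℕ) : ℝ) * (p⁻¹.toReal + σ⁻¹.toReal))) * (tkm n p t k m)⁻¹ := by
  have hc : (2 : ℝ) ^ (((k * n : ℕ) : ℝ) * p⁻¹.toReal) * (tkm n p t k m).toReal ≠ 0 := by
    have := ENNReal.toReal_pos hpos hfin
    positivity
  rw [eLpNorm_congr_ae (f := fun x => (tbar n p t k x)⁻¹) (tbar_ae_eq_const n p t k m).inv,
    Pi.inv_def, eLpNorm_const_restrict_dyadicCube hσ, enorm_inv hc,
    enorm_two_rpow_mul_toReal _ hfin,
    ENNReal.mul_inv (.inl (ENNReal.rpow_pos two_pos ENNReal.ofNat_ne_top).ne') (.inr hpos),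
    ← ENNReal.rpow_neg, mul_right_comm, ← two_rpow_add]
  congr 2
  ring

lemma tkm_tbar (hp : p ≠ 0) (hfin : tkm n p t k m ≠ ∞) :
    tkm n p (tbar n p t) k m = tkm n p t k m := by
  rw [tkm, eLpNorm_tbar_restrict_dyadicCube hp hfin, sub_self, mul_zero, ENNReal.rpow_zero,
    one_mul]

end StepWeight

section MemX

variable {n : ℕ} {p σ₁ σ₂ : ℝ≥0∞} {α₁ α₂ α₃ : ℝ} {t : ℕ → (Fin n → ℝ) → ℝ}

theorem MemX.exists_tkm_le_tkm_subcube (ht : MemX n p σ₁ σ₂ α₁ α₂ α₃ (tbar n p t))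
    (hp : p ≠ 0) (hσ₁ : σ₁ ≠ 0) (hfin : ∀ k m, tkm n p t k m ≠ ∞) :
    ∃ C₁ : ℝ, 0 < C₁ ∧ ∀ (k d : ℕ) (m m' : Fin n → ℤ),
      dyadicCube n (k + d) m' ⊆ dyadicCube n k m →
        tkm n p t k m ≤ ENNReal.ofReal
          (C₁ * 2 ^ (-α₁ * d + d * n * (p⁻¹.toReal + σ₁⁻¹.toReal))) * tkm n p t (k + d) m' := by
  obtain ⟨-, ⟨C₁, hC₁, h1⟩, -, hpos, -⟩ := ht
  simp only [tkm_tbar hp (hfin _ _)] at h1 hpos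
  refine ⟨C₁, hC₁, fun k d m m' hsub => ?_⟩
  set a := p⁻¹.toReal
  set b := σ₁⁻¹.toReal
  set N : ℕ := k * n
  set T := tkm n p t k m
  set S := tkm n p t (k + d) m'
  have hS0 : S ≠ 0 := (hpos _ _).ne'
  have hshrink : 2 ^ (-((((k + d) * n : ℕ) : ℝ) * (a + b))) * S⁻¹
      ≤ eLpNorm (fun x => (tbar n p t (k + d) x)⁻¹) σ₁ (volume.restrict (dyadicCube n k m)) := by
    rw [← eLpNorm_inv_tbar_restrict_dyadicCube hσ₁ hS0 (hfin _ _)]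
    exact eLpNorm_mono_measure _ (Measure.restrict_mono hsub le_rfl)
  have h : 2 ^ (N * a + (N * b + -((((k + d) * n : ℕ) : ℝ) * (a + b)))) * (T * S⁻¹)
      ≤ ENNReal.ofReal (C₁ * 2 ^ (α₁ * ((k : ℝ) - ((k + d : ℕ) : ℝ)))) * 1 :=
    calc _ = ((2 : ℝ≥0∞) ^ N) ^ a * T
            * (((2 : ℝ≥0∞) ^ N) ^ b * (2 ^ (-((((k + d) * n : ℕ) : ℝ) * (a + b))) * S⁻¹)) := by
          rw [two_pow_rpow, two_pow_rpow, two_rpow_add, two_rpow_add]; ring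
      _ ≤ _ := by gcongr
      _ ≤ _ := h1 k (k + d) (k.le_add_right d) m
      _ = _ := (mul_one _).symm
  rw [← ENNReal.mul_inv_le_iff hS0 (hfin _ _)]
  convert (le_ofReal_mul_two_rpow_sub_mul hC₁.le h).trans_eq (mul_one _) using 4
  push_cast [N]; ring

theorem MemX.exists_tkm_subcube_le_tkm (ht : MemX n p σ₁ σ₂ α₁ α₂ α₃ (tbar n p t))
    (hp : p ≠ 0) (hσ₂ : σ₂ ≠ 0) (hfin : ∀ k m, tkm n p t k m ≠ ∞) :
    ∃ C₂ : ℝ, 0 < C₂ ∧ ∀ (k d : ℕ) (m m' : Fin n → ℤ),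
      dyadicCube n (k + d) m' ⊆ dyadicCube n k m →
        tkm n p t (k + d) m' ≤ ENNReal.ofReal
          (C₂ * 2 ^ (α₂ * d + d * n * (σ₂⁻¹.toReal - p⁻¹.toReal))) * tkm n p t k m := by
  obtain ⟨-, -, ⟨C₂, hC₂, h2⟩, -⟩ := ht
  simp only [tkm_tbar hp (hfin _ _)] at h2
  refine ⟨C₂, hC₂, fun k d m m' hsub => ?_⟩
  set a := p⁻¹.toReal
  set b := σ₂⁻¹.toReal
  set N : ℕ := k * n
  set T := tkm n p t k m
  set S := tkm n p t (k + d) m'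
  have hshrink : 2 ^ ((((k + d) * n : ℕ) : ℝ) * (a - b)) * S
      ≤ eLpNorm (tbar n p t (k + d)) σ₂ (volume.restrict (dyadicCube n k m)) := by
    rw [← eLpNorm_tbar_restrict_dyadicCube hσ₂ (hfin _ _)]
    exact eLpNorm_mono_measure _ (Measure.restrict_mono hsub le_rfl)
  have h : 2 ^ (N * b + (((k + d) * n : ℕ) : ℝ) * (a - b)) * S
      ≤ ENNReal.ofReal (C₂ * 2 ^ (α₂ * (((k + d : ℕ) : ℝ) - k) + N * a)) * T :=
    calc _ = ((2 : ℝ≥0∞) ^ N) ^ b * (2 ^ ((((k + d) * n : ℕ) : ℝ) * (a - b)) * S) := by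
          rw [two_pow_rpow, two_rpow_add]; ring
      _ ≤ _ := by gcongr
      _ ≤ _ := h2 k (k + d) (k.le_add_right d) m
      _ = _ := by
          rw [two_pow_rpow, ENNReal.ofReal_mul hC₂.le, ENNReal.ofReal_mul hC₂.le, ofReal_two_rpow,
            ofReal_two_rpow, two_rpow_add]
          ring
  convert le_ofReal_mul_two_rpow_sub_mul hC₂.le h using 5
  push_cast [N]; ring

end MemX

theorem weight_two_sided_comparison_general (n : ℕ) (p σ₁ σ₂ : ℝ≥0∞) (α₁ α₂ α₃ : ℝ)
    (hp : 0 < p) (hσ₁ : 0 < σ₁) (hσ₂ : 0 < σ₂)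
    (t : ℕ → (Fin n → ℝ) → ℝ) (hadm : PAdmissible n p t)
    (ht : MemX n p σ₁ σ₂ α₁ α₂ α₃ (tbar n p t)) :
    ∀ d : ℕ, ∃ C : ℝ, 0 < C ∧ ∀ (k : ℕ) (m m' : Fin n → ℤ),
      dyadicCube n (k + d) m' ⊆ dyadicCube n k m →
        (ENNReal.ofReal C)⁻¹ * tkm n p t (k + d) m' ≤ tkm n p t k m ∧
        tkm n p t k m ≤ ENNReal.ofReal C * tkm n p t (k + d) m' := by
  intro d
  have hfin : ∀ k m, tkm n p t k m ≠ ∞ := fun k m => (hadm.2.2 k m).ne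
  obtain ⟨C₁, hC₁, hupper⟩ := ht.exists_tkm_le_tkm_subcube hp.ne' hσ₁.ne' hfin
  obtain ⟨C₂, hC₂, hlower⟩ := ht.exists_tkm_subcube_le_tkm hp.ne' hσ₂.ne' hfin
  set C := max (C₁ * 2 ^ (-α₁ * d + d * n * (p⁻¹.toReal + σ₁⁻¹.toReal)))
    (C₂ * 2 ^ (α₂ * d + d * n * (σ₂⁻¹.toReal - p⁻¹.toReal)))
  have hC : 0 < C := lt_max_of_lt_left (by positivity)
  refine ⟨C, hC, fun k m m' hsub => ⟨?_, ?_⟩⟩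
  · rw [ENNReal.inv_mul_le_iff (ENNReal.ofReal_pos.2 hC).ne' ENNReal.ofReal_ne_top]
    exact (hlower k d m m' hsub).trans (by gcongr; exact le_max_right _ _)
  · exact (hupper k d m m' hsub).trans (by gcongr; exact le_max_left _ _)

/-- two-sided comparison (2.8) of local norms on nested dyadic cubes. -/
theorem weight_two_sided_comparison (n : ℕ) (p σ₁ σ₂ : ℝ≥0∞) (α₁ α₂ α₃ : ℝ)
    (hp : 0 < p) (hσ₁ : 0 < σ₁) (hσ₂ : 0 < σ₂) (hα₃ : 0 ≤ α₃)
    (t : ℕ → (Fin n → ℝ) → ℝ) (hadm : PAdmissible n p t)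
    (ht : MemX n p σ₁ σ₂ α₁ α₂ α₃ (tbar n p t)) :
    ∀ d : ℕ, ∃ C : ℝ, 0 < C ∧ ∀ (k : ℕ) (m m' : Fin n → ℤ),
      dyadicCube n (k + d) m' ⊆ dyadicCube n k m →
        (ENNReal.ofReal C)⁻¹ * tkm n p t (k + d) m' ≤ tkm n p t k m ∧
        tkm n p t k m ≤ ENNReal.ofReal C * tkm n p t (k + d) m' :=
  weight_two_sided_comparison_general n p σ₁ σ₂ α₁ α₂ α₃ hp hσ₁ hσ₂ t hadm ht
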